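/- arXiv:2501.13892 — 3 statements merged into one kernel-verified Lean document; each statement's English description precedes it below -/
import Mathlib

section
/- Let α, β, γ, η > 0 and let g : ℝ → ℝ be an even Schwartz function whose Fourier transform satisfies ĝ ≥ 0 and 0 < ∫_0^∞ ĝ(ξ) ξ²/(1 + β²ξ²)² dξ < ∞. Define η* = (π/(α²γ)) · (∫_0^∞ ĝ(ξ) ξ²/(1 + β²ξ²)² dξ)^{−1}. Then there exists v > 0 satisfying (η/π) ∫_0^∞ α²γ ĝ(ξ) ξ²/((1 + β²ξ²)² + α²v²ξ²) dξ = 1 if and only if η > η*; moreover, when it exists, such v > 0 is unique. -/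
open MeasureTheory Real Complex

noncomputable section

/-- Fourier transform with the convention `f̂(ξ) = ∫ f(x) e^{-i x ξ} dx`. -/
def fourierHat (g : ℝ → ℝ) (ξ : ℝ) : ℂ :=
  ∫ x : ℝ, (g x : ℂ) * Complex.exp (-(Complex.I * x * ξ))

/-!
With `f ξ = ĝ(ξ) ξ² / (1 + β²ξ²)² ≥ 0` and `c ξ = α²ξ² / (1 + β²ξ²)² > 0`, the velocity integral
is `α²γ ∫₀^∞ f ξ / (1 + v² c ξ) dξ`. By dominated convergence (with dominating function `f`) this
is continuous in `v` and tends to `0` as `v → ∞`; since `∫ f > 0`, it is strictly decreasing on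
`[0, ∞)`. So the left side of the velocity equation decreases strictly from its value
`(η/π) α²γ ∫ f` at `v = 0` down to `0`, and by the intermediate value theorem it takes the value
`1` at some `v > 0` exactly when `(η/π) α²γ ∫ f > 1`, i.e. when `η > η*`, and then only once.
-/

open Filter Topology Set

def dampedIntegral {X : Type*} [MeasurableSpace X] (μ : Measure X) (f c : X → ℝ) (v : ℝ) : ℝ :=
  ∫ x, f x / (1 + v ^ 2 * c x) ∂μ

section DampedIntegral

variable {X : Type*} [MeasurableSpace X] {μ : Measure X} {f c : X → ℝ}

@[simp]
lemma dampedIntegral_zero : dampedIntegral μ f c 0 = ∫ x, f x ∂μ := by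
  simp [dampedIntegral]

lemma norm_div_one_add_sq_mul_le {a b : ℝ} (hb : 0 ≤ b) (v : ℝ) :
    ‖a / (1 + v ^ 2 * b)‖ ≤ ‖a‖ := by
  rw [norm_div]
  exact div_le_self (norm_nonneg a) (le_abs.2 (.inl (le_add_of_nonneg_right (by positivity))))

lemma aestronglyMeasurable_dampedIntegrand (hf : AEStronglyMeasurable f μ)
    (hc : AEStronglyMeasurable c μ) (v : ℝ) :
    AEStronglyMeasurable (fun x => f x / (1 + v ^ 2 * c x)) μ :=
  hf.div₀ (aestronglyMeasurable_const.add (aestronglyMeasurable_const.mul hc))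

lemma norm_dampedIntegrand_le (hc : ∀ᵐ x ∂μ, 0 ≤ c x) (v : ℝ) :
    ∀ᵐ x ∂μ, ‖f x / (1 + v ^ 2 * c x)‖ ≤ ‖f x‖ := by
  filter_upwards [hc] with x hx using norm_div_one_add_sq_mul_le hx v

lemma integrable_dampedIntegrand (hf : Integrable f μ) (hcm : AEStronglyMeasurable c μ)
    (hc : ∀ᵐ x ∂μ, 0 ≤ c x) (v : ℝ) : Integrable (fun x => f x / (1 + v ^ 2 * c x)) μ :=
  hf.mono (aestronglyMeasurable_dampedIntegrand hf.1 hcm v) (norm_dampedIntegrand_le hc v)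

lemma continuous_dampedIntegral (hf : Integrable f μ) (hcm : AEStronglyMeasurable c μ)
    (hc : ∀ᵐ x ∂μ, 0 ≤ c x) : Continuous (dampedIntegral μ f c) := by
  refine continuous_of_dominated (aestronglyMeasurable_dampedIntegrand hf.1 hcm)
    (norm_dampedIntegrand_le hc) hf.norm ?_
  filter_upwards [hc] with x hx
  exact continuous_const.div (by fun_prop) fun v => by positivity

lemma tendsto_dampedIntegral_atTop (hf : Integrable f μ) (hcm : AEStronglyMeasurable c μ)
    (hc : ∀ᵐ x ∂μ, 0 < c x) : Tendsto (dampedIntegral μ f c) atTop (𝓝 0) := by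
  have hc' : ∀ᵐ x ∂μ, 0 ≤ c x := hc.mono fun _ hx => hx.le
  show Tendsto (fun v => ∫ x, f x / (1 + v ^ 2 * c x) ∂μ) atTop (𝓝 0)
  simpa only [integral_zero] using tendsto_integral_filter_of_dominated_convergence _
    (.of_forall (aestronglyMeasurable_dampedIntegrand hf.1 hcm))
    (.of_forall (norm_dampedIntegrand_le hc')) hf.norm
    (hc.mono fun x hx => tendsto_const_nhds.div_atTop <| tendsto_atTop_add_const_left _ 1 <|
      (tendsto_pow_atTop two_ne_zero).atTop_mul_const hx)

lemma strictAntiOn_dampedIntegral (hf : Integrable f μ) (hf0 : 0 ≤ᵐ[μ] f)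
    (hpos : 0 < ∫ x, f x ∂μ) (hcm : AEStronglyMeasurable c μ) (hc : ∀ᵐ x ∂μ, 0 < c x) :
    StrictAntiOn (dampedIntegral μ f c) (Ici 0) := by
  intro v₁ hv₁ v₂ _ hv
  have hc' : ∀ᵐ x ∂μ, 0 ≤ c x := hc.mono fun _ hx => hx.le
  set d := fun x => f x / (1 + v₁ ^ 2 * c x) - f x / (1 + v₂ ^ 2 * c x)
  have hd0 : 0 ≤ᵐ[μ] d := by
    filter_upwards [hf0, hc'] with x hfx hcx
    exact sub_nonneg.2 (div_le_div_of_nonneg_left hfx (by positivity) (by gcongr))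
  have hd : Integrable d μ :=
    (integrable_dampedIntegrand hf hcm hc' v₁).sub (integrable_dampedIntegrand hf hcm hc' v₂)
  have hsupp : Function.support f ≤ᵐ[μ] Function.support d := by
    filter_upwards [hf0, hc] with x hfx hcx hx
    exact (sub_pos.2 (div_lt_div_of_pos_left (lt_of_le_of_ne hfx (Ne.symm hx))
      (by positivity) (by gcongr))).ne'
  have hdpos : 0 < ∫ x, d x ∂μ := (integral_pos_iff_support_of_nonneg_ae hd0 hd).2 <|
    ((integral_pos_iff_support_of_nonneg_ae hf0 hf).1 hpos).trans_le (measure_mono_ae hsupp)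
  rw [integral_sub (integrable_dampedIntegrand hf hcm hc' v₁)
    (integrable_dampedIntegrand hf hcm hc' v₂)] at hdpos
  exact sub_pos.1 hdpos

end DampedIntegral

lemma exists_pos_eq_iff_lt_apply_zero {G : ℝ → ℝ} (hGc : Continuous G)
    (hGa : StrictAntiOn G (Ici 0)) (hGt : Tendsto G atTop (𝓝 0)) {y : ℝ} (hy : 0 < y) :
    (∃ v > 0, G v = y) ↔ y < G 0 := by
  constructor
  · rintro ⟨v, hv, rfl⟩
    exact hGa self_mem_Ici hv.le hv
  · intro hy0
    obtain ⟨V, hVy, hV⟩ := ((hGt.eventually_lt_const hy).and (eventually_gt_atTop 0)).exists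
    obtain ⟨v, hv, hvy⟩ := intermediate_value_Ioo' hV.le hGc.continuousOn ⟨hVy, hy0⟩
    exact ⟨v, hv.1, hvy⟩

lemma integral_Ioi_velocity_eq (α β γ v : ℝ) (h : ℝ → ℝ) :
    ∫ ξ in Ioi (0 : ℝ), α ^ 2 * γ * h ξ * ξ ^ 2 / ((1 + β ^ 2 * ξ ^ 2) ^ 2 + α ^ 2 * v ^ 2 * ξ ^ 2) =
      α ^ 2 * γ * dampedIntegral (volume.restrict (Ioi 0))
        (fun ξ => h ξ * ξ ^ 2 / (1 + β ^ 2 * ξ ^ 2) ^ 2)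
        (fun ξ => α ^ 2 * ξ ^ 2 / (1 + β ^ 2 * ξ ^ 2) ^ 2) v := by
  rw [dampedIntegral, ← integral_const_mul]
  congr 1 with ξ
  have : (1 + β ^ 2 * ξ ^ 2) ^ 2 ≠ 0 := by positivity
  field_simp

theorem traveling_pulse_velocity_exists_iff_general
    (α β γ η : ℝ) (hα : 0 < α) (hγ : 0 < γ) (hη : 0 < η)
    (g : SchwartzMap ℝ ℝ)
    (hg_pos : ∀ ξ, 0 ≤ (fourierHat (⇑g) ξ).re)
    (hg_int : IntegrableOn
      (fun ξ => (fourierHat (⇑g) ξ).re * ξ ^ 2 / (1 + β ^ 2 * ξ ^ 2) ^ 2) (Set.Ioi 0))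
    (hg_intpos : 0 < ∫ ξ in Set.Ioi (0 : ℝ),
      (fourierHat (⇑g) ξ).re * ξ ^ 2 / (1 + β ^ 2 * ξ ^ 2) ^ 2) :
    ((∃ v > 0, (η / Real.pi) *
        ∫ ξ in Set.Ioi (0 : ℝ),
          α ^ 2 * γ * (fourierHat (⇑g) ξ).re * ξ ^ 2 /
            ((1 + β ^ 2 * ξ ^ 2) ^ 2 + α ^ 2 * v ^ 2 * ξ ^ 2) = 1) ↔
      η > Real.pi / (α ^ 2 * γ) *
        (∫ ξ in Set.Ioi (0 : ℝ),
          (fourierHat (⇑g) ξ).re * ξ ^ 2 / (1 + β ^ 2 * ξ ^ 2) ^ 2)⁻¹) ∧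
    (∀ v₁ v₂, 0 < v₁ → 0 < v₂ →
      (η / Real.pi) *
        ∫ ξ in Set.Ioi (0 : ℝ),
          α ^ 2 * γ * (fourierHat (⇑g) ξ).re * ξ ^ 2 /
            ((1 + β ^ 2 * ξ ^ 2) ^ 2 + α ^ 2 * v₁ ^ 2 * ξ ^ 2) = 1 →
      (η / Real.pi) *
        ∫ ξ in Set.Ioi (0 : ℝ),
          α ^ 2 * γ * (fourierHat (⇑g) ξ).re * ξ ^ 2 /
            ((1 + β ^ 2 * ξ ^ 2) ^ 2 + α ^ 2 * v₂ ^ 2 * ξ ^ 2) = 1 →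
      v₁ = v₂) := by
  simp only [integral_Ioi_velocity_eq α β γ _ fun ξ => (fourierHat g ξ).re]
  set F := dampedIntegral (volume.restrict (Ioi 0))
    (fun ξ => (fourierHat g ξ).re * ξ ^ 2 / (1 + β ^ 2 * ξ ^ 2) ^ 2)
    (fun ξ => α ^ 2 * ξ ^ 2 / (1 + β ^ 2 * ξ ^ 2) ^ 2)
  have hc : ∀ᵐ ξ ∂(volume.restrict (Ioi (0 : ℝ))), 0 < α ^ 2 * ξ ^ 2 / (1 + β ^ 2 * ξ ^ 2) ^ 2 :=
    (ae_restrict_iff' measurableSet_Ioi).2 <| .of_forall fun ξ (hξ : 0 < ξ) => by positivity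
  have hcm : AEStronglyMeasurable (fun ξ : ℝ => α ^ 2 * ξ ^ 2 / (1 + β ^ 2 * ξ ^ 2) ^ 2)
      (volume.restrict (Ioi 0)) :=
    (Continuous.div (by fun_prop) (by fun_prop) fun ξ => by positivity).aestronglyMeasurable
  have hf0 : 0 ≤ᵐ[volume.restrict (Ioi (0 : ℝ))]
      fun ξ => (fourierHat g ξ).re * ξ ^ 2 / (1 + β ^ 2 * ξ ^ 2) ^ 2 :=
    .of_forall fun ξ => by have := hg_pos ξ; positivity
  have hGa : StrictAntiOn (fun v => η / π * (α ^ 2 * γ * F v)) (Ici 0) := fun v₁ h₁ v₂ h₂ hv => by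
    dsimp only
    gcongr
    exact strictAntiOn_dampedIntegral hg_int hf0 hg_intpos hcm hc h₁ h₂ hv
  have hGc : Continuous fun v => η / π * (α ^ 2 * γ * F v) :=
    continuous_const.mul (continuous_const.mul
      (continuous_dampedIntegral hg_int hcm (hc.mono fun _ hx => hx.le)))
  have hGt : Tendsto (fun v => η / π * (α ^ 2 * γ * F v)) atTop (𝓝 0) := by
    simpa using
      ((tendsto_dampedIntegral_atTop hg_int hcm hc).const_mul (α ^ 2 * γ)).const_mul (η / π)
  have hthreshold : η > π / (α ^ 2 * γ) * (∫ ξ in Ioi (0 : ℝ),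
      (fourierHat g ξ).re * ξ ^ 2 / (1 + β ^ 2 * ξ ^ 2) ^ 2)⁻¹ ↔ 1 < η / π * (α ^ 2 * γ * F 0) := by
    rw [show F 0 = _ from dampedIntegral_zero, gt_iff_lt, ← div_eq_mul_inv, div_div,
      div_lt_iff₀ (by positivity), div_mul_eq_mul_div, one_lt_div pi_pos]
  exact ⟨(exists_pos_eq_iff_lt_apply_zero hGc hGa hGt one_pos).trans hthreshold.symm,
    fun v₁ v₂ h₁ h₂ e₁ e₂ => hGa.injOn h₁.le h₂.le (e₁.trans e₂.symm)⟩

/-- the velocity equation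
`(η/π) ∫₀^∞ α²γ ĝ(ξ) ξ²/((1+β²ξ²)² + α²v²ξ²) dξ = 1`
admits a solution `v > 0` iff `η > η* = (π/(α²γ)) (∫₀^∞ ĝ(ξ) ξ²/(1+β²ξ²)² dξ)⁻¹`,
and such a positive solution is unique. -/
theorem traveling_pulse_velocity_exists_iff
    (α β γ η : ℝ) (hα : 0 < α) (hβ : 0 < β) (hγ : 0 < γ) (hη : 0 < η)
    (g : SchwartzMap ℝ ℝ) (hg_even : ∀ x, g (-x) = g x)
    (hg_pos : ∀ ξ, 0 ≤ (fourierHat (⇑g) ξ).re)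
    (hg_int : IntegrableOn
      (fun ξ => (fourierHat (⇑g) ξ).re * ξ ^ 2 / (1 + β ^ 2 * ξ ^ 2) ^ 2) (Set.Ioi 0))
    (hg_intpos : 0 < ∫ ξ in Set.Ioi (0 : ℝ),
      (fourierHat (⇑g) ξ).re * ξ ^ 2 / (1 + β ^ 2 * ξ ^ 2) ^ 2) :
    ((∃ v > 0, (η / Real.pi) *
        ∫ ξ in Set.Ioi (0 : ℝ),
          α ^ 2 * γ * (fourierHat (⇑g) ξ).re * ξ ^ 2 /
            ((1 + β ^ 2 * ξ ^ 2) ^ 2 + α ^ 2 * v ^ 2 * ξ ^ 2) = 1) ↔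
      η > Real.pi / (α ^ 2 * γ) *
        (∫ ξ in Set.Ioi (0 : ℝ),
          (fourierHat (⇑g) ξ).re * ξ ^ 2 / (1 + β ^ 2 * ξ ^ 2) ^ 2)⁻¹) ∧
    (∀ v₁ v₂, 0 < v₁ → 0 < v₂ →
      (η / Real.pi) *
        ∫ ξ in Set.Ioi (0 : ℝ),
          α ^ 2 * γ * (fourierHat (⇑g) ξ).re * ξ ^ 2 /
            ((1 + β ^ 2 * ξ ^ 2) ^ 2 + α ^ 2 * v₁ ^ 2 * ξ ^ 2) = 1 →
      (η / Real.pi) *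
        ∫ ξ in Set.Ioi (0 : ℝ),
          α ^ 2 * γ * (fourierHat (⇑g) ξ).re * ξ ^ 2 /
            ((1 + β ^ 2 * ξ ^ 2) ^ 2 + α ^ 2 * v₂ ^ 2 * ξ ^ 2) = 1 →
      v₁ = v₂) :=
  traveling_pulse_velocity_exists_iff_general α β γ η hα hγ hη g hg_pos hg_int hg_intpos

end
end

section
/- Let α, β, γ > 0. For ε > 0 let g_ε(x) = (1/(ε√π)) e^{−x²/ε²}, whose Fourier transform is ĝ_ε(ξ) = e^{−ε²ξ²/4}, and define the critical stiffness η*_ε = (π/(α²γ)) · (∫_0^∞ ĝ_ε(ξ) ξ²/(1 + β²ξ²)² dξ)^{−1}. Then ε ↦ η*_ε is monotone nondecreasing and lim_{ε→0⁺} η*_ε = 4β³/(α²γ). -/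
open MeasureTheory Real Complex

noncomputable section

/-- The Gaussian approximation of the Dirac mass: `g_ε(x) = (1/(ε√π)) e^{-x²/ε²}`. -/
def gaussApprox (ε x : ℝ) : ℝ := (1 / (ε * Real.sqrt Real.pi)) * Real.exp (-x ^ 2 / ε ^ 2)

/-- The critical stiffness `η*_ε = (π/(α²γ)) (∫₀^∞ ĝ_ε(ξ) ξ²/(1+β²ξ²)² dξ)⁻¹`,
written with the explicit Fourier transform `ĝ_ε(ξ) = e^{-ε²ξ²/4}`. -/
def etaStar (α β γ ε : ℝ) : ℝ :=
  Real.pi / (α ^ 2 * γ) *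
    (∫ ξ in Set.Ioi (0 : ℝ),
      Real.exp (-(ε ^ 2 * ξ ^ 2) / 4) * ξ ^ 2 / (1 + β ^ 2 * ξ ^ 2) ^ 2)⁻¹

/-!
The weight `ĝ_ε(ξ) = e^{-ε²ξ²/4}` lies in `(0, 1]`, decreases in `ε ≥ 0` and tends to `1` as
`ε → 0`. Hence the integral in `η*_ε` is positive, decreases in `ε` and, by dominated convergence,
tends to `∫₀^∞ ξ²/(1+β²ξ²)² dξ = π/(4β³)`, read off from the antiderivative
`(arctan (βξ) - βξ/(1+β²ξ²))/(2β³)`. The Fourier transform of `g_ε` is the Gaussian integral of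
the quadratic exponent `-x²/ε² - iξx`.
-/

open Set Filter Topology

def gaussHat (ε ξ : ℝ) : ℝ := Real.exp (-(ε ^ 2 * ξ ^ 2) / 4)

lemma gaussHat_pos (ε ξ : ℝ) : 0 < gaussHat ε ξ := Real.exp_pos _

lemma gaussHat_le_one (ε ξ : ℝ) : gaussHat ε ξ ≤ 1 :=
  Real.exp_le_one_iff.2 (by rw [neg_div]; exact neg_nonpos.2 (by positivity))

lemma gaussHat_zero (ξ : ℝ) : gaussHat 0 ξ = 1 := by simp [gaussHat]

lemma continuous_gaussHat (ξ : ℝ) : Continuous fun ε => gaussHat ε ξ := by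
  unfold gaussHat; fun_prop

lemma gaussHat_anti {ε₁ ε₂ : ℝ} (h₀ : 0 ≤ ε₁) (h : ε₁ ≤ ε₂) (ξ : ℝ) :
    gaussHat ε₂ ξ ≤ gaussHat ε₁ ξ := by
  unfold gaussHat
  gcongr

theorem fourierHat_gaussApprox {ε : ℝ} (hε : 0 < ε) (ξ : ℝ) :
    fourierHat (gaussApprox ε) ξ = gaussHat ε ξ := by
  have hε' : (ε : ℂ) ≠ 0 := by exact_mod_cast hε.ne'
  have hb : (-(1 / (ε : ℂ) ^ 2)).re < 0 := by
    rw [neg_re, neg_lt_zero, ← Complex.ofReal_pow, ← Complex.ofReal_one, ← Complex.ofReal_div,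
      Complex.ofReal_re]
    positivity
  have hintegrand (x : ℝ) : (gaussApprox ε x : ℂ) * cexp (-(I * x * ξ)) =
      (1 / (ε * Real.sqrt π) : ℂ) * cexp (-(1 / (ε : ℂ) ^ 2) * x ^ 2 + (-I * ξ) * x + 0) := by
    simp only [gaussApprox]
    push_cast
    rw [mul_assoc, ← Complex.exp_add]
    congr 2
    field_simp
    ring
  have hsqrt_pi : ((π : ℂ) / -(-(1 / (ε : ℂ) ^ 2))) ^ (1 / 2 : ℂ) = (Real.sqrt π * ε : ℝ) := by
    rw [neg_neg, div_div_eq_mul_div, div_one, ← Complex.ofReal_pow, ← Complex.ofReal_mul,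
      show (1 / 2 : ℂ) = ((1 / 2 : ℝ) : ℂ) by norm_num, ← Complex.ofReal_cpow (by positivity),
      ← Real.sqrt_eq_rpow, Real.sqrt_mul Real.pi_pos.le, Real.sqrt_sq hε.le]
  rw [fourierHat, funext hintegrand, integral_const_mul, integral_cexp_quadratic hb, hsqrt_pi]
  simp only [gaussHat]
  push_cast
  field_simp
  rw [I_sq]
  ring_nf

section GaussianDamping

variable {μ : Measure ℝ} {k : ℝ → ℝ}

lemma MeasureTheory.Integrable.gaussHat_mul (hk : Integrable k μ) (ε : ℝ) :
    Integrable (fun ξ => gaussHat ε ξ * k ξ) μ := by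
  refine hk.bdd_mul (c := 1) ?_ (.of_forall fun ξ => ?_)
  · unfold gaussHat
    fun_prop
  · rw [Real.norm_of_nonneg (gaussHat_pos ε ξ).le]
    exact gaussHat_le_one ε ξ

lemma antitoneOn_integral_gaussHat_mul (hk : Integrable k μ) (hk₀ : 0 ≤ᵐ[μ] k) :
    AntitoneOn (fun ε => ∫ ξ, gaussHat ε ξ * k ξ ∂μ) (Ici 0) := by
  intro ε₁ hε₁ ε₂ _ h
  refine integral_mono_ae (hk.gaussHat_mul ε₂) (hk.gaussHat_mul ε₁) ?_
  filter_upwards [hk₀] with ξ hξ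
  exact mul_le_mul_of_nonneg_right (gaussHat_anti hε₁ h ξ) hξ

lemma integral_gaussHat_mul_pos (hk : Integrable k μ) (hk₀ : 0 ≤ᵐ[μ] k)
    (hpos : 0 < ∫ ξ, k ξ ∂μ) (ε : ℝ) : 0 < ∫ ξ, gaussHat ε ξ * k ξ ∂μ := by
  have hsupp : Function.support (fun ξ => gaussHat ε ξ * k ξ) = Function.support k := by
    ext ξ
    simp [(gaussHat_pos ε ξ).ne']
  rw [integral_pos_iff_support_of_nonneg_ae hk₀ hk] at hpos
  rw [integral_pos_iff_support_of_nonneg_ae _ (hk.gaussHat_mul ε), hsupp]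
  · exact hpos
  · filter_upwards [hk₀] with ξ hξ
    exact mul_nonneg (gaussHat_pos ε ξ).le hξ

lemma tendsto_integral_gaussHat_mul (hk : Integrable k μ) :
    Tendsto (fun ε => ∫ ξ, gaussHat ε ξ * k ξ ∂μ) (𝓝 0) (𝓝 (∫ ξ, k ξ ∂μ)) := by
  refine tendsto_integral_filter_of_dominated_convergence (fun ξ => ‖k ξ‖)
    (.of_forall fun ε => (hk.gaussHat_mul ε).aestronglyMeasurable)
    (.of_forall fun ε => .of_forall fun ξ => ?_) hk.norm (.of_forall fun ξ => ?_)
  · rw [norm_mul, Real.norm_of_nonneg (gaussHat_pos ε ξ).le]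
    exact mul_le_of_le_one_left (norm_nonneg _) (gaussHat_le_one ε ξ)
  · simpa [gaussHat_zero] using ((continuous_gaussHat ξ).tendsto 0).mul_const (k ξ)

end GaussianDamping

section Antiderivative

variable {β : ℝ}

lemma hasDerivAt_arctan_sub_div (hβ : β ≠ 0) (ξ : ℝ) :
    HasDerivAt (fun ξ => (Real.arctan (β * ξ) - β * ξ / (1 + β ^ 2 * ξ ^ 2)) / (2 * β ^ 3))
      (ξ ^ 2 / (1 + β ^ 2 * ξ ^ 2) ^ 2) ξ := by
  have hden : 1 + β ^ 2 * ξ ^ 2 ≠ 0 := by positivity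
  have hlin : HasDerivAt (fun ξ => β * ξ) β ξ := by simpa using (hasDerivAt_id ξ).const_mul β
  have hquad : HasDerivAt (fun ξ => 1 + β ^ 2 * ξ ^ 2) (β ^ 2 * (2 * ξ)) ξ := by
    simpa using ((hasDerivAt_pow 2 ξ).const_mul (β ^ 2)).const_add 1
  refine ((hlin.arctan.sub (hlin.div hquad hden)).div_const (2 * β ^ 3)).congr_deriv ?_
  field_simp
  ring

lemma tendsto_arctan_sub_div_atTop (hβ : 0 < β) :
    Tendsto (fun ξ => (Real.arctan (β * ξ) - β * ξ / (1 + β ^ 2 * ξ ^ 2)) / (2 * β ^ 3))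
      atTop (𝓝 (π / (4 * β ^ 3))) := by
  have hlin : Tendsto (fun ξ => β * ξ) atTop atTop := tendsto_id.const_mul_atTop hβ
  have harctan : Tendsto (fun ξ => Real.arctan (β * ξ)) atTop (𝓝 (π / 2)) :=
    (tendsto_nhds_of_tendsto_nhdsWithin Real.tendsto_arctan_atTop).comp hlin
  have hrat : Tendsto (fun ξ => β * ξ / (1 + β ^ 2 * ξ ^ 2)) atTop (𝓝 0) := by
    refine tendsto_of_tendsto_of_tendsto_of_le_of_le' tendsto_const_nhds
      (tendsto_inv_atTop_zero.comp hlin) ?_ ?_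
    all_goals filter_upwards [hlin.eventually_gt_atTop 0] with ξ hξ
    · positivity
    · calc β * ξ / (1 + β ^ 2 * ξ ^ 2) ≤ β * ξ / (β * ξ) ^ 2 := by
            gcongr
            linarith [mul_pow β ξ 2]
        _ = (β * ξ)⁻¹ := by field_simp
  convert (harctan.sub hrat).div_const (2 * β ^ 3) using 2
  field_simp
  ring

lemma integrableOn_Ioi_sq_div_one_add_sq_sq (hβ : 0 < β) :
    IntegrableOn (fun ξ => ξ ^ 2 / (1 + β ^ 2 * ξ ^ 2) ^ 2) (Ioi 0) :=
  integrableOn_Ioi_deriv_of_nonneg' (fun ξ _ => hasDerivAt_arctan_sub_div hβ.ne' ξ)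
    (fun ξ _ => by positivity) (tendsto_arctan_sub_div_atTop hβ)

lemma integral_Ioi_sq_div_one_add_sq_sq (hβ : 0 < β) :
    ∫ ξ in Ioi 0, ξ ^ 2 / (1 + β ^ 2 * ξ ^ 2) ^ 2 = π / (4 * β ^ 3) := by
  simpa using integral_Ioi_of_hasDerivAt_of_nonneg' (a := 0)
    (fun ξ _ => hasDerivAt_arctan_sub_div hβ.ne' ξ) (fun ξ _ => by positivity)
    (tendsto_arctan_sub_div_atTop hβ)

end Antiderivative

section CriticalStiffness

variable {α β γ : ℝ}

lemma etaStar_eq_mul_inv_integral (ε : ℝ) : etaStar α β γ ε =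
    π / (α ^ 2 * γ) * (∫ ξ in Ioi 0, gaussHat ε ξ * (ξ ^ 2 / (1 + β ^ 2 * ξ ^ 2) ^ 2))⁻¹ := by
  simp only [etaStar, gaussHat, mul_div_assoc]

lemma monotoneOn_etaStar (hβ : 0 < β) (hγ : 0 ≤ γ) : MonotoneOn (etaStar α β γ) (Ici 0) := by
  intro ε₁ hε₁ ε₂ hε₂ h
  have hk := integrableOn_Ioi_sq_div_one_add_sq_sq hβ
  have hk₀ : 0 ≤ᵐ[volume.restrict (Ioi 0)] fun ξ : ℝ => ξ ^ 2 / (1 + β ^ 2 * ξ ^ 2) ^ 2 :=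
    .of_forall fun ξ => by positivity
  have hpos : 0 < ∫ ξ in Ioi 0, ξ ^ 2 / (1 + β ^ 2 * ξ ^ 2) ^ 2 := by
    rw [integral_Ioi_sq_div_one_add_sq_sq hβ]
    positivity
  simp only [etaStar_eq_mul_inv_integral]
  refine mul_le_mul_of_nonneg_left (inv_anti₀ ?_ ?_) (by positivity)
  · exact integral_gaussHat_mul_pos hk hk₀ hpos ε₂
  · exact antitoneOn_integral_gaussHat_mul hk hk₀ hε₁ hε₂ h

lemma tendsto_etaStar_nhds_zero (hβ : 0 < β) :
    Tendsto (etaStar α β γ) (𝓝 0) (𝓝 (4 * β ^ 3 / (α ^ 2 * γ))) := by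
  have h := tendsto_integral_gaussHat_mul (integrableOn_Ioi_sq_div_one_add_sq_sq hβ)
  rw [integral_Ioi_sq_div_one_add_sq_sq hβ] at h
  convert (h.inv₀ (by positivity)).const_mul (π / (α ^ 2 * γ)) using 2
  · exact etaStar_eq_mul_inv_integral _
  · rw [inv_div, div_mul_div_comm, mul_comm π, mul_div_mul_right _ _ Real.pi_ne_zero]

end CriticalStiffness

theorem etaStar_monotone_tendsto_general
    (α β γ : ℝ) (hβ : 0 < β) (hγ : 0 < γ) :
    (∀ ε > 0, ∀ ξ : ℝ, fourierHat (gaussApprox ε) ξ = (Real.exp (-(ε ^ 2 * ξ ^ 2) / 4) : ℝ)) ∧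
    (∀ ε₁ ε₂ : ℝ, 0 < ε₁ → ε₁ ≤ ε₂ → etaStar α β γ ε₁ ≤ etaStar α β γ ε₂) ∧
    Filter.Tendsto (etaStar α β γ) (nhdsWithin 0 (Set.Ioi 0))
      (nhds (4 * β ^ 3 / (α ^ 2 * γ))) :=
  ⟨fun _ hε => fourierHat_gaussApprox hε,
    fun _ _ hε₁ h => monotoneOn_etaStar hβ hγ.le hε₁.le (hε₁.le.trans h) h,
    (tendsto_etaStar_nhds_zero hβ).mono_left nhdsWithin_le_nhds⟩

/-- `ĝ_ε(ξ) = e^{-ε²ξ²/4}`, the critical stiffness `ε ↦ η*_ε` is monotone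
nondecreasing, and `η*_ε → 4β³/(α²γ)` as `ε → 0⁺`. -/
theorem etaStar_monotone_tendsto
    (α β γ : ℝ) (hα : 0 < α) (hβ : 0 < β) (hγ : 0 < γ) :
    (∀ ε > 0, ∀ ξ : ℝ, fourierHat (gaussApprox ε) ξ = (Real.exp (-(ε ^ 2 * ξ ^ 2) / 4) : ℝ)) ∧
    (∀ ε₁ ε₂ : ℝ, 0 < ε₁ → ε₁ ≤ ε₂ → etaStar α β γ ε₁ ≤ etaStar α β γ ε₂) ∧
    Filter.Tendsto (etaStar α β γ) (nhdsWithin 0 (Set.Ioi 0))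
      (nhds (4 * β ^ 3 / (α ^ 2 * γ))) :=
  etaStar_monotone_tendsto_general α β γ hβ hγ
end
end

section
/- Let g : ℝ → ℝ be integrable and x_c : [0,∞) → ℝ continuous. Suppose s : [0,∞) × ℝ → ℝ is C¹ in t and C² in x, solves ∂_t s(t,x) + s(t,x) − ∂²_{xx} s(t,x) = g(x − x_c(t)) for all t > 0 and x ∈ ℝ, and suppose that for every t ≥ 0 the functions s(t,·) and ∂_t s(t,·) are integrable, that ∂_x s(t,x) → 0 as |x| → ∞, and that d/dt ∫_ℝ s(t,x) dx = ∫_ℝ ∂_t s(t,x) dx. Then for every t ≥ 0, ∫_ℝ s(t,x) dx = e^{−t} ∫_ℝ s(0,x) dx + (1 − e^{−t}) ∫_ℝ g(x) dx. -/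
/-!
Integrating the equation in `x`, the diffusion term drops out because `∂ₓ s(t,·)` vanishes at
`±∞`, and translation invariance of Lebesgue measure turns `∫ g(x - x_c(t)) dx` into `∫ g`.
The total deformation `S(t) = ∫ s(t,·)` therefore solves `S' = ∫ g - S`, whose solutions
relax exponentially to `∫ g`: `eᵗ (S(t) - ∫ g)` has zero derivative.
-/

open MeasureTheory Real
open Filter Topology Set

theorem integral_iteratedDeriv_two_eq_zero {E : Type*} [NormedAddCommGroup E] [NormedSpace ℝ E]
    [CompleteSpace E] {f : ℝ → E} (hf : ContDiff ℝ 2 f) (hint : Integrable (iteratedDeriv 2 f))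
    (hdecay : Tendsto (deriv f) (cocompact ℝ) (𝓝 0)) :
    ∫ x, iteratedDeriv 2 f x = 0 := by
  have hderiv : ∀ x, HasDerivAt (deriv f) (iteratedDeriv 2 f x) x := fun x => by
    rw [iteratedDeriv_succ, iteratedDeriv_one]
    exact ((hf.iterate_deriv' 1 1).differentiable one_ne_zero x).hasDerivAt
  rw [cocompact_eq_atBot_atTop, tendsto_sup] at hdecay
  simpa using integral_of_hasDerivAt_of_tendsto hderiv hint hdecay.1 hdecay.2

theorem eq_exp_neg_mul_add_of_hasDerivAt_sub_self {F : ℝ → ℝ} {c : ℝ}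
    (hcont : ContinuousOn F (Ici 0)) (hderiv : ∀ t > 0, HasDerivAt F (c - F t) t)
    {t : ℝ} (ht : 0 ≤ t) :
    F t = exp (-t) * F 0 + (1 - exp (-t)) * c := by
  have hG : ∀ τ > 0, HasDerivAt (fun τ => exp τ * (F τ - c)) 0 τ := fun τ hτ => by
    have := (hasDerivAt_exp τ).mul ((hderiv τ hτ).sub_const c)
    rwa [show exp τ * (F τ - c) + exp τ * (c - F τ) = 0 by ring] at this
  have hGcont : ContinuousOn (fun τ => exp τ * (F τ - c)) (Icc 0 t) :=
    continuous_exp.continuousOn.mul ((hcont.mono Icc_subset_Ici_self).sub continuousOn_const)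
  have hconst : exp t * (F t - c) = exp 0 * (F 0 - c) := by
    have := intervalIntegral.integral_eq_sub_of_hasDerivAt_of_le ht hGcont
      (fun τ hτ => hG τ hτ.1) intervalIntegrable_const
    simp only [intervalIntegral.integral_zero] at this
    linarith
  have hexp : exp (-t) * exp t = 1 := by rw [← exp_add, neg_add_cancel, exp_zero]
  calc F t = exp (-t) * (exp t * (F t - c)) + c := by rw [← mul_assoc, hexp]; ring
    _ = exp (-t) * F 0 + (1 - exp (-t)) * c := by rw [hconst, exp_zero]; ring

theorem total_deformation_relaxes_general
    (g : ℝ → ℝ) (hg : Integrable g)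
    (x_c : ℝ → ℝ)
    (s : ℝ → ℝ → ℝ)
    (hreg_x : ∀ t ≥ (0 : ℝ), ContDiff ℝ 2 (s t))
    (hpde : ∀ t > (0 : ℝ), ∀ x : ℝ,
      deriv (fun τ => s τ x) t + s t x - iteratedDeriv 2 (s t) x = g (x - x_c t))
    (hint : ∀ t ≥ (0 : ℝ), Integrable (s t))
    (hint' : ∀ t ≥ (0 : ℝ), Integrable (fun x => deriv (fun τ => s τ x) t))
    (hdecay : ∀ t ≥ (0 : ℝ),
      Filter.Tendsto (fun x => deriv (s t) x) (Filter.cocompact ℝ) (nhds 0))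
    (hswap : ∀ t ≥ (0 : ℝ),
      HasDerivAt (fun τ => ∫ x : ℝ, s τ x) (∫ x : ℝ, deriv (fun τ => s τ x) t) t) :
    ∀ t ≥ (0 : ℝ),
      ∫ x : ℝ, s t x =
        Real.exp (-t) * (∫ x : ℝ, s 0 x) + (1 - Real.exp (-t)) * ∫ x : ℝ, g x := by
  have hrate : ∀ t > (0 : ℝ),
      ∫ x, deriv (fun τ => s τ x) t = (∫ x, g x) - ∫ x, s t x := fun t ht => by
    have hs_int : Integrable (fun x => deriv (fun τ => s τ x) t + s t x) :=
      (hint' t ht.le).add (hint t ht.le)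
    have hg_shift : Integrable (fun x => g (x - x_c t)) := hg.comp_sub_right (x_c t)
    have hdiffusion : iteratedDeriv 2 (s t) =
        fun x => deriv (fun τ => s τ x) t + s t x - g (x - x_c t) := by
      funext x; linarith [hpde t ht x]
    have hdiffusion_zero :
        ∫ x, (deriv (fun τ => s τ x) t + s t x - g (x - x_c t)) = 0 := hdiffusion ▸
      integral_iteratedDeriv_two_eq_zero (hreg_x t ht.le) (hdiffusion ▸ hs_int.sub hg_shift)
        (hdecay t ht.le)
    rw [integral_sub hs_int hg_shift, integral_add (hint' t ht.le) (hint t ht.le),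
      integral_sub_right_eq_self] at hdiffusion_zero
    linarith
  intro t ht
  refine eq_exp_neg_mul_add_of_hasDerivAt_sub_self (F := fun τ => ∫ x, s τ x) (fun τ hτ => ?_) (fun τ hτ => ?_) ht
  · exact (hswap τ hτ).continuousAt.continuousWithinAt
  · exact hrate τ hτ ▸ hswap τ hτ.le

/-- relaxation of the total deformation. If `s` solves
`∂ₜ s + s - ∂ₓₓ s = g(x - x_c(t))` with the stated integrability, decay of `∂ₓ s`,
and differentiation-under-the-integral hypotheses, then
`∫ s(t,·) = e^{-t} ∫ s(0,·) + (1-e^{-t}) ∫ g`. -/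
theorem total_deformation_relaxes
    (g : ℝ → ℝ) (hg : Integrable g)
    (x_c : ℝ → ℝ) (hxc : ContinuousOn x_c (Set.Ici 0))
    (s : ℝ → ℝ → ℝ)
    (hreg_t : ∀ x : ℝ, ∀ t > (0 : ℝ), DifferentiableAt ℝ (fun τ => s τ x) t)
    (hreg_x : ∀ t ≥ (0 : ℝ), ContDiff ℝ 2 (s t))
    (hpde : ∀ t > (0 : ℝ), ∀ x : ℝ,
      deriv (fun τ => s τ x) t + s t x - iteratedDeriv 2 (s t) x = g (x - x_c t))
    (hint : ∀ t ≥ (0 : ℝ), Integrable (s t))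
    (hint' : ∀ t ≥ (0 : ℝ), Integrable (fun x => deriv (fun τ => s τ x) t))
    (hdecay : ∀ t ≥ (0 : ℝ),
      Filter.Tendsto (fun x => deriv (s t) x) (Filter.cocompact ℝ) (nhds 0))
    (hswap : ∀ t ≥ (0 : ℝ),
      HasDerivAt (fun τ => ∫ x : ℝ, s τ x) (∫ x : ℝ, deriv (fun τ => s τ x) t) t) :
    ∀ t ≥ (0 : ℝ),
      ∫ x : ℝ, s t x =
        Real.exp (-t) * (∫ x : ℝ, s 0 x) + (1 - Real.exp (-t)) * ∫ x : ℝ, g x :=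
  total_deformation_relaxes_general g hg x_c s hreg_x hpde hint hint' hdecay hswap
end
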